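/- arXiv:0704.3558 — 6 statements merged into one kernel-verified Lean document; each statement's English description precedes it below -/
import Mathlib

section
/- Let I and J be sets and f : I × J → ℂ a bounded function. If the set of rows {f(i, ·) : i ∈ I} is totally bounded in the sup-norm (i.e., in ℓ^∞(J)), then the set of columns {f(·, j) : j ∈ J} is totally bounded in ℓ^∞(I). -/
/-- for a bounded matrix, if the set of rows is totally bounded in
`ℓ^∞(J)` (the uniformity of uniform convergence), then so is the set of columns
in `ℓ^∞(I)`. -/
theorem columns_totallyBounded_of_rows {I J : Type*} (f : I → J → ℂ)
    (hb : ∃ C, ∀ i j, ‖f i j‖ ≤ C)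
    (h : TotallyBounded (Set.range fun i => (UniformFun.ofFun (f i) : UniformFun J ℂ))) :
    TotallyBounded (Set.range fun j => (UniformFun.ofFun (fun i => f i j) : UniformFun I ℂ)) := by
  classical
  obtain ⟨C, hC⟩ := hb
  rw [(UniformFun.hasBasis_uniformity_of_basis I ℂ Metric.uniformity_basis_dist).totallyBounded_iff]
  intro ε hε
  have hε3 : (0:ℝ) < ε / 3 := by linarith
  -- an ε/3 net (of rows) for the set of rows
  have hmem : UniformFun.gen J ℂ {p : ℂ × ℂ | dist p.1 p.2 < ε / 3} ∈ uniformity (UniformFun J ℂ) :=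
    (UniformFun.hasBasis_uniformity_of_basis J ℂ Metric.uniformity_basis_dist).mem_of_mem hε3
  obtain ⟨t, hts, htf, htc⟩ := h.exists_subset hmem
  haveI : Fintype t := htf.fintype
  -- every row is ε/3-close (uniformly) to some element of t
  have hrow : ∀ i : I, ∃ y ∈ t, ∀ j, dist (f i j) (UniformFun.toFun y j) < ε / 3 := by
    intro i
    have := htc (Set.mem_range_self i)
    rw [Set.mem_iUnion₂] at this
    obtain ⟨y, hy, hxy⟩ := this
    exact ⟨y, hy, fun j => hxy j⟩
  -- elements of t are uniformly bounded by C
  have htb : ∀ y ∈ t, ∀ j, ‖UniformFun.toFun y j‖ ≤ C := by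
    intro y hy j
    obtain ⟨i, hi⟩ := hts hy
    rw [← hi]
    exact hC i j
  -- the "fingerprint" map J → (t → ℂ)
  set Φ : J → (t → ℂ) := fun j y => UniformFun.toFun (y : UniformFun J ℂ) j with hΦ
  have hStb : TotallyBounded (Set.range Φ) := by
    refine TotallyBounded.subset ?_ (isCompact_closedBall (0 : t → ℂ) (max C 0)).totallyBounded
    rintro _ ⟨j, rfl⟩
    rw [Metric.mem_closedBall]
    refine (dist_pi_le_iff (le_max_right _ _)).2 fun y => ?_
    simp only [Pi.zero_apply, dist_zero_right]
    exact le_trans (htb y y.2 j) (le_max_left _ _)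
  obtain ⟨u, hus, huf, huc⟩ :=
    hStb.exists_subset (Metric.dist_mem_uniformity hε3)
  haveI : Fintype u := huf.fintype
  -- each element of u is the fingerprint of some column index
  have hucol : ∀ z : u, ∃ j : J, Φ j = z := fun z => hus z.2
  choose jdx hjdx using hucol
  -- the candidate finite net for columns
  refine ⟨Set.range fun z : u => (UniformFun.ofFun (fun i => f i (jdx z)) : UniformFun I ℂ),
    Set.finite_range _, ?_⟩
  rintro _ ⟨j, rfl⟩
  -- find the net element close to column j
  have := huc (Set.mem_range_self j)
  rw [Set.mem_iUnion₂] at this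
  obtain ⟨z, hz, hdz⟩ := this
  rw [Set.mem_iUnion₂]
  refine ⟨(UniformFun.ofFun (fun i => f i (jdx ⟨z, hz⟩)) : UniformFun I ℂ),
    Set.mem_range_self _, fun i => ?_⟩
  set j' := jdx ⟨z, hz⟩ with hj'
  obtain ⟨y, hy, hdy⟩ := hrow i
  have h1 : dist (f i j) (UniformFun.toFun y j) < ε / 3 := hdy j
  have h3 : dist (f i j') (UniformFun.toFun y j') < ε / 3 := hdy j'
  have h2 : dist (UniformFun.toFun y j) (UniformFun.toFun y j') < ε / 3 := by
    have hd : dist (Φ j) (Φ j') < ε / 3 := by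
      rw [hjdx ⟨z, hz⟩]
      exact hdz
    calc dist (UniformFun.toFun y j) (UniformFun.toFun y j')
        = dist (Φ j ⟨y, hy⟩) (Φ j' ⟨y, hy⟩) := rfl
      _ ≤ dist (Φ j) (Φ j') := dist_le_pi_dist _ _ _
      _ < ε / 3 := hd
  show dist (f i j) (f i j') < ε
  calc dist (f i j) (f i j')
      ≤ dist (f i j) (UniformFun.toFun y j) + dist (UniformFun.toFun y j) (UniformFun.toFun y j')
        + dist (UniformFun.toFun y j') (f i j') := dist_triangle4 _ _ _ _
    _ < ε / 3 + ε / 3 + ε / 3 := by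
        have := h3
        rw [dist_comm] at this
        linarith
    _ = ε := by ring
end

section
/- Let I, J, L be sets and f a bounded complex function on I × J × L. Suppose (a) f is a strongly compact matrix when viewed as a matrix with row index set L and column index set I × J, and (b) for every fixed a ∈ L, the section (i,j) ↦ f(i,j,a) is a strongly compact matrix on I × J. Then f is a strongly compact matrix when viewed as a matrix with row index set I and column index set J × L. -/
/-!
Fix `ε > 0`. Total boundedness of the columns `a ↦ f(·,·,a)` gives a finite set `A ⊆ L` and a
map `φ : L → A` with `|f(i,j,a) - f(i,j,φ a)| ≤ ε` for all `i, j, a`. Hence every row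
`(j,a) ↦ f(i,j,a)` lies within `ε` of `(j,a) ↦ f(i,j,φ a)`, which is a `1`-Lipschitz function of
the finitely many section rows `(f(i,·,b))_{b ∈ A}`. These range over a finite product of totally
bounded sets, which is totally bounded, so the rows are within `ε` of a totally bounded set for
every `ε`, and are therefore totally bounded themselves.
-/

open Set Filter Uniformity UniformConvergence UniformFun

/-- A bounded complex matrix is *strongly compact* if its set of rows is totally
bounded in `ℓ^∞` of the column index set. -/
def StronglyCompactMatrix {I J : Type*} (f : I → J → ℂ) : Prop :=
  (∃ C, ∀ i j, ‖f i j‖ ≤ C) ∧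
    TotallyBounded (Set.range fun i => (UniformFun.ofFun (f i) : UniformFun J ℂ))

theorem totallyBounded_pi {ι : Type*} {α : ι → Type*} [∀ i, UniformSpace (α i)]
    {s : ∀ i, Set (α i)} (hs : ∀ i, TotallyBounded (s i)) : TotallyBounded (univ.pi s) := by
  refine totallyBounded_iff_ultrafilter.2 fun l hl => (cauchy_pi_iff' _).2 fun i => ?_
  refine totallyBounded_iff_ultrafilter.1 (hs i) (l.map (Function.eval i)) ?_
  rw [Ultrafilter.coe_map, le_principal_iff]
  exact mem_map.2 (mem_of_superset (le_principal_iff.1 hl) fun x hx => hx i (mem_univ i))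

theorem totallyBounded_of_forall_near_totallyBounded {α : Type*} [UniformSpace α] {s : Set α}
    (h : ∀ V ∈ 𝓤 α, ∃ t, TotallyBounded t ∧ s ⊆ ⋃ y ∈ t, {x | (x, y) ∈ V}) :
    TotallyBounded s := by
  intro V hV
  obtain ⟨W, hW, hWV⟩ := comp_mem_uniformity_sets hV
  obtain ⟨t, ht, hst⟩ := h W hW
  obtain ⟨u, hu, htu⟩ := ht W hW
  refine ⟨u, hu, fun x hx => ?_⟩
  obtain ⟨y, hy, hxy⟩ := mem_iUnion₂.1 (hst hx)
  obtain ⟨z, hz, hyz⟩ := mem_iUnion₂.1 (htu hy)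
  exact mem_iUnion₂.2 ⟨z, hz, hWV (SetRel.prodMk_mem_comp hxy hyz)⟩

theorem TotallyBounded.exists_finite_forall_edist_lt {ι α : Type*} [PseudoEMetricSpace α]
    {g : ι → α} (h : TotallyBounded (range g)) {ε : ENNReal} (hε : 0 < ε) :
    ∃ A : Set ι, A.Finite ∧ ∀ i, ∃ j : A, edist (g i) (g j) < ε := by
  obtain ⟨t, hts, htfin, hcover⟩ := EMetric.totallyBounded_iff'.1 h ε hε
  obtain ⟨A, rfl, hinj⟩ := exists_image_eq_injOn_of_subset_range hts
  refine ⟨A, htfin.of_finite_image hinj, fun i => ?_⟩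
  obtain ⟨j, hj, hij⟩ := mem_iUnion₂.1 (biUnion_image ▸ hcover (mem_range_self i))
  exact ⟨⟨j, hj⟩, hij⟩

theorem UniformFun.lipschitzWith_ofFun_uncurry_comp {J L A β : Type*} [PseudoEMetricSpace β]
    [Fintype A] (φ : L → A) :
    LipschitzWith 1 fun g : A → (J →ᵤ β) => ofFun fun q : J × L => toFun (g (φ q.2)) q.1 :=
  lipschitzWith_ofFun_iff.2 fun q => by
    have := (lipschitzWith_eval (α := J) (β := β) q.1).comp
      (LipschitzWith.eval (α := fun _ : A => J →ᵤ β) (φ q.2))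
    rwa [mul_one] at this

theorem stronglyCompact_assoc_general {I J L : Type*} (f : I → J → L → ℂ)
    (h1 : StronglyCompactMatrix (fun (a : L) (p : I × J) => f p.1 p.2 a))
    (h2 : ∀ a : L, StronglyCompactMatrix (fun i j => f i j a)) :
    StronglyCompactMatrix (fun (i : I) (q : J × L) => f i q.1 q.2) := by
  obtain ⟨⟨C, hC⟩, hcols⟩ := h1
  refine ⟨⟨C, fun i q => hC q.2 (i, q.1)⟩,
    totallyBounded_of_forall_near_totallyBounded fun V hV => ?_⟩
  obtain ⟨ε, hε, hεV⟩ := uniformity_basis_edist_le.mem_iff.1 hV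
  obtain ⟨A, hA, hnet⟩ := hcols.exists_finite_forall_edist_lt hε
  choose φ hφ using hnet
  have := hA.fintype
  let Ψ : (A → (J →ᵤ ℂ)) → (J × L →ᵤ ℂ) := fun g => ofFun fun q => toFun (g (φ q.2)) q.1
  let sectionRows (i : I) (a : A) : J →ᵤ ℂ := ofFun fun j => f i j a
  have hΨ : TotallyBounded (Ψ '' univ.pi fun a => range (sectionRows · a)) :=
    (totallyBounded_pi fun a : A => (h2 a).2).image
      (lipschitzWith_ofFun_uncurry_comp φ).uniformContinuous
  refine ⟨_, hΨ, ?_⟩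
  rintro _ ⟨i, rfl⟩
  have hclose : edist (ofFun fun q : J × L => f i q.1 q.2) (Ψ (sectionRows i)) ≤ ε :=
    edist_le.2 fun q => (edist_eval_le (x := (i, q.1))).trans (hφ q.2).le
  exact mem_iUnion₂.2
    ⟨_, mem_image_of_mem _ (mem_univ_pi.2 fun a => mem_range_self i), hεV hclose⟩

/-- if `f` is strongly compact as a matrix on `L` and `I × J`, and
every `a`-section is strongly compact as a matrix on `I` and `J`, then `f` is
strongly compact as a matrix on `I` and `J × L`. -/
theorem stronglyCompact_assoc {I J L : Type*} (f : I → J → L → ℂ)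
    (hb : ∃ C, ∀ i j a, ‖f i j a‖ ≤ C)
    (h1 : StronglyCompactMatrix (fun (a : L) (p : I × J) => f p.1 p.2 a))
    (h2 : ∀ a : L, StronglyCompactMatrix (fun i j => f i j a)) :
    StronglyCompactMatrix (fun (i : I) (q : J × L) => f i q.1 q.2) :=
  stronglyCompact_assoc_general f h1 h2
end

section
/- Let I and J be topological spaces and f : I × J → ℂ a bounded separately continuous function which is a strongly compact matrix. Then f is jointly continuous on I × J. -/
/-- a bounded separately continuous strongly compact matrix on
topological spaces `I`, `J` is jointly continuous. -/
theorem stronglyCompact_jointly_continuous {I J : Type*} [TopologicalSpace I]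
    [TopologicalSpace J] (f : I → J → ℂ)
    (hrow : ∀ i, Continuous (f i)) (hcol : ∀ j, Continuous fun i => f i j)
    (h : StronglyCompactMatrix f) :
    Continuous fun p : I × J => f p.1 p.2 := by
  rw [continuous_iff_continuousAt]
  rintro ⟨i₀, j₀⟩
  rw [ContinuousAt, Metric.tendsto_nhds]
  intro ε hε
  set ε' := ε / 4 with hε'def
  have hε' : 0 < ε' := by positivity
  -- get a finite ε'-net for the rows
  obtain ⟨t, htsub, htfin, htcov⟩ := totallyBounded_iff_subset.mp h.2
    (UniformFun.gen J ℂ {p : ℂ × ℂ | dist p.1 p.2 < ε'})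
    ((UniformFun.hasBasis_uniformity J ℂ).mem_of_mem (Metric.dist_mem_uniformity hε'))
  -- neighborhood conditions
  have hU : ∀ᶠ i in nhds i₀, dist (f i j₀) (f i₀ j₀) < ε' := by
    have := (hcol j₀).continuousAt (x := i₀)
    rw [ContinuousAt, Metric.tendsto_nhds] at this
    exact this ε' hε'
  have hV : ∀ᶠ j in nhds j₀,
      ∀ g ∈ t, dist (UniformFun.toFun g j) (UniformFun.toFun g j₀) < ε' := by
    rw [Filter.eventually_all_finite htfin]
    intro g hg
    obtain ⟨kg, hkg⟩ := htsub hg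
    have := (hrow kg).continuousAt (x := j₀)
    rw [ContinuousAt, Metric.tendsto_nhds] at this
    have := this ε' hε'
    filter_upwards [this] with j hj
    rw [← hkg]
    simpa using hj
  rw [nhds_prod_eq]
  filter_upwards [hU.prod_inl (nhds j₀), hV.prod_inr (nhds i₀)] with p hp1 hp2
  obtain ⟨i, j⟩ := p
  simp only at hp1 hp2 ⊢
  -- find the net element close to row i
  have : (UniformFun.ofFun (f i) : UniformFun J ℂ) ∈
      ⋃ g ∈ t, {x | (x, g) ∈ UniformFun.gen J ℂ {p : ℂ × ℂ | dist p.1 p.2 < ε'}} :=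
    htcov ⟨i, rfl⟩
  simp only [Set.mem_iUnion] at this
  obtain ⟨g, hg, hclose⟩ := this
  have hclose' : ∀ x, dist (f i x) (UniformFun.toFun g x) < ε' := fun x => hclose x
  calc dist (f i j) (f i₀ j₀)
      ≤ dist (f i j) (UniformFun.toFun g j) + dist (UniformFun.toFun g j) (UniformFun.toFun g j₀)
        + dist (UniformFun.toFun g j₀) (f i j₀) + dist (f i j₀) (f i₀ j₀) := by
        exact dist_triangle4 _ _ _ _ |>.trans (by
          gcongr
          exact dist_triangle _ _ _)
    _ < ε' + ε' + ε' + ε' := by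
        have h1 := hclose' j
        have h2 := hp2 g hg
        have h3 := hclose' j₀
        rw [dist_comm] at h3
        gcongr
    _ = ε := by ring
end

section
/- Let I and J be Hausdorff topological spaces and S ⊆ I dense. Let f : I × J → ℂ be bounded such that every column f(·,j) is continuous on I, every row f(s,·) with s ∈ S is continuous on J, and the set {f(s,·) : s ∈ S} is relatively weakly compact in the Banach space C_b(J) of bounded continuous functions on J. Then every row f(r,·), r ∈ I, is continuous on J, i.e., f is separately continuous. -/
open BoundedContinuousFunction

/-- Prop. 4: `I`, `J` Hausdorff, `S ⊆ I` dense, `f` bounded with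
continuous columns, with continuous rows at points of `S`, and with the rows at
`S` forming a relatively weakly compact subset of `C_b(J)`.  Then all rows are
continuous. -/
theorem rows_continuous_of_weakly_compact {I J : Type*} [TopologicalSpace I]
    [TopologicalSpace J] [T2Space I] [T2Space J] (S : Set I) (hS : Dense S)
    (f : I → J → ℂ) (hb : ∃ C, ∀ i j, ‖f i j‖ ≤ C)
    (hcol : ∀ j, Continuous fun i => f i j)
    (hrow : ∀ s ∈ S, Continuous (f s))
    (hwc : IsCompact (closure (toWeakSpace ℂ (J →ᵇ ℂ) ''
      {h : J →ᵇ ℂ | ∃ s ∈ S, ⇑h = f s}))) :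
    ∀ r : I, Continuous (f r) := by
  obtain ⟨C, hC⟩ := hb
  classical
  set φ : I → (J →ᵇ ℂ) := fun i =>
    if hc : Continuous (f i) then ofNormedAddCommGroup (f i) hc C (fun j => hC i j) else 0 with hφ
  have hφS : ∀ s ∈ S, ⇑(φ s) = f s := by
    intro s hs
    simp only [hφ, dif_pos (hrow s hs)]
    rfl
  intro r
  have hne : (nhdsWithin r S).NeBot := mem_closure_iff_nhdsWithin_neBot.mp (hS r)
  set F : Filter (WeakSpace ℂ (J →ᵇ ℂ)) :=
    Filter.map (fun i => toWeakSpace ℂ (J →ᵇ ℂ) (φ i)) (nhdsWithin r S) with hF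
  have hmemS : ∀ᶠ s in nhdsWithin r S, s ∈ S := eventually_mem_nhdsWithin
  have hFle : F ≤ Filter.principal (closure (toWeakSpace ℂ (J →ᵇ ℂ) ''
      {h : J →ᵇ ℂ | ∃ s ∈ S, ⇑h = f s})) := by
    rw [Filter.le_principal_iff, hF, Filter.mem_map]
    filter_upwards [hmemS] with s hs
    exact subset_closure ⟨φ s, ⟨s, hs, hφS s hs⟩, rfl⟩
  obtain ⟨h, _, hcl⟩ := hwc.exists_clusterPt hFle
  have key : ∀ j, (toWeakSpace ℂ (J →ᵇ ℂ)).symm h j = f r j := by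
    intro j
    have hev : Continuous fun x : WeakSpace ℂ (J →ᵇ ℂ) =>
        (evalCLM ℂ j : (J →ᵇ ℂ) →L[ℂ] ℂ) ((toWeakSpace ℂ (J →ᵇ ℂ)).symm x) :=
      WeakBilin.eval_continuous ((topDualPairing ℂ (J →ᵇ ℂ)).flip) (evalCLM ℂ j)
    have hid : MapClusterPt h F id := by rwa [mapClusterPt_def, Filter.map_id]
    have hmap : MapClusterPt ((toWeakSpace ℂ (J →ᵇ ℂ)).symm h j) F
        ((fun x => (evalCLM ℂ j : (J →ᵇ ℂ) →L[ℂ] ℂ) ((toWeakSpace ℂ (J →ᵇ ℂ)).symm x)) ∘ id) :=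
      hid.continuousAt_comp hev.continuousAt
    have hG : ClusterPt ((toWeakSpace ℂ (J →ᵇ ℂ)).symm h j)
        (Filter.map (fun i => φ i j) (nhdsWithin r S)) := by
      have := hmap
      rw [Function.comp_id] at this
      rwa [MapClusterPt, hF, Filter.map_map] at this
    have heq : Filter.map (fun i => φ i j) (nhdsWithin r S) =
        Filter.map (fun i => f i j) (nhdsWithin r S) := by
      apply Filter.map_congr
      filter_upwards [hmemS] with s hs
      rw [hφS s hs]
    rw [heq] at hG
    have htend : Filter.Tendsto (fun i => f i j) (nhdsWithin r S) (nhds (f r j)) :=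
      ((hcol j).tendsto r).mono_left nhdsWithin_le_nhds
    exact t2_iff_nhds.mp inferInstance (hG.mono htend)
  have : f r = ⇑((toWeakSpace ℂ (J →ᵇ ℂ)).symm h) := by
    funext j; exact (key j).symm
  rw [this]
  exact map_continuous _
end

section
/- Let f be a bounded complex function on I × J. The set of rows {f(i,·) : i ∈ I} is relatively weakly compact in ℓ^∞(J) if and only if the set of columns {f(·,j) : j ∈ J} is relatively weakly compact in ℓ^∞(I). -/
/-!
A bounded family is relatively weakly compact iff it converges weakly along every ultrafilter on
its index set (Banach–Alaoglu in the bidual). For the rows of a bounded matrix `f` in `ℓ^∞(J)`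
this is equivalent to Grothendieck's double-limit condition
`lim_U lim_V f = lim_V lim_U f` for all ultrafilters `U` on `I` and `V` on `J`, which is
symmetric in rows and columns.

Necessity: test weak convergence against coordinate evaluations and against the functionals
`x ↦ lim_V x`. Sufficiency: after subtracting the column limits along `U`, suppose
`φ (rows)` does not tend to `0`. Then the rows have `φ`-variation bounded below on the sets
where they are large, and since `φ` has finite total variation a Ramsey-type exhaustion
extracts rows `a r` and points `p s` with `|f (a r) (p s)| ≥ δ` for `r ≤ s` and `≤ δ / 2` for
`s < r`; along a free ultrafilter on `ℕ` the two iterated limits of this triangular matrix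
differ.
-/

open Filter Topology Set
open scoped lp ENNReal

section UltrafilterLimit

variable {α E : Type*} [NormedAddCommGroup E] [ProperSpace E] {W : Ultrafilter α} {u : α → E}
  {C : ℝ}

theorem Ultrafilter.tendsto_limUnder_of_norm_le (hu : ∀ a, ‖u a‖ ≤ C) :
    Tendsto u W (𝓝 (limUnder W u)) := by
  obtain ⟨c, -, hc⟩ := (isCompact_closedBall (0 : E) C).ultrafilter_le_nhds (W.map u)
    (le_principal_iff.2 (Ultrafilter.mem_map.2 (Eventually.of_forall fun a =>
      mem_closedBall_zero_iff.2 (hu a))))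
  exact tendsto_nhds_limUnder ⟨c, hc⟩

theorem Ultrafilter.norm_limUnder_le_of_eventually {η : ℝ} (hu : ∀ a, ‖u a‖ ≤ C)
    (h : ∀ᶠ a in W, ‖u a‖ ≤ η) : ‖limUnder W u‖ ≤ η :=
  le_of_tendsto (W.tendsto_limUnder_of_norm_le hu).norm h

theorem Ultrafilter.norm_limUnder_le (hu : ∀ a, ‖u a‖ ≤ C) : ‖limUnder W u‖ ≤ C :=
  W.norm_limUnder_le_of_eventually hu (Eventually.of_forall hu)

theorem Ultrafilter.le_norm_limUnder {δ : ℝ} (hu : ∀ a, ‖u a‖ ≤ C)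
    (h : ∀ᶠ a in W, δ ≤ ‖u a‖) : δ ≤ ‖limUnder W u‖ :=
  ge_of_tendsto (W.tendsto_limUnder_of_norm_le hu).norm h

theorem Ultrafilter.limUnder_sub {v : α → E} {D : ℝ} (hu : ∀ a, ‖u a‖ ≤ C)
    (hv : ∀ a, ‖v a‖ ≤ D) : limUnder W (fun a => u a - v a) = limUnder W u - limUnder W v :=
  ((W.tendsto_limUnder_of_norm_le hu).sub (W.tendsto_limUnder_of_norm_le hv)).limUnder_eq

theorem Ultrafilter.limUnder_sub_const (hu : ∀ a, ‖u a‖ ≤ C) (c : E) :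
    limUnder W (fun a => u a - c) = limUnder W u - c :=
  ((W.tendsto_limUnder_of_norm_le hu).sub_const c).limUnder_eq

theorem Ultrafilter.limUnder_map {β X : Type*} [TopologicalSpace X] [Nonempty X]
    (W : Ultrafilter α) (a : α → β) (v : β → X) :
    limUnder (W.map a : Filter β) v = limUnder W (v ∘ a) := by
  rw [limUnder, Ultrafilter.coe_map, Filter.map_map]
  rfl

end UltrafilterLimit

section WeakCompactness

variable {𝕜 E I : Type*} [RCLike 𝕜] [NormedAddCommGroup E] [NormedSpace 𝕜 E]

theorem isCompact_closure_toWeakSpace_range_iff {g : I → E}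
    (hg : Bornology.IsBounded (range g)) :
    IsCompact (closure (toWeakSpace 𝕜 E '' range g)) ↔
      ∀ U : Ultrafilter I, ∃ x : E, ∀ φ : StrongDual 𝕜 E,
        Tendsto (fun i => φ (g i)) U (𝓝 (φ x)) := by
  constructor
  · intro hK U
    obtain ⟨y, -, hy⟩ := hK.ultrafilter_le_nhds (U.map (toWeakSpace 𝕜 E ∘ g))
      (le_principal_iff.2 (Ultrafilter.mem_map.2 (Eventually.of_forall fun i =>
        subset_closure (mem_image_of_mem _ (mem_range_self i)))))
    exact ⟨(toWeakSpace 𝕜 E).symm y, fun φ =>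
      ((WeakBilin.eval_continuous _ φ).tendsto y).comp hy⟩
  · intro h
    refine NormedSpace.isCompact_closure_of_isBounded 𝕜 E _ ?_ ?_
    · rwa [(toWeakSpace 𝕜 E).injective.preimage_image]
    intro L hL
    obtain ⟨G, hGS, hGL⟩ := mem_closure_iff_ultrafilter.1 hL
    set ι := NormedSpace.inclusionInDoubleDualWeak 𝕜 E
    set q : I → WeakDual 𝕜 (StrongDual 𝕜 E) := fun i => ι (toWeakSpace 𝕜 E (g i))
    have hq : q '' univ ∈ G := by
      rw [image_univ]
      rwa [← range_comp, ← range_comp] at hGS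
    set U := Ultrafilter.ofComapInfPrincipal hq
    obtain ⟨x, hx⟩ := h U
    have hqx : Tendsto q U (𝓝 (ι (toWeakSpace 𝕜 E x))) :=
      tendsto_iff_forall_eval_tendsto_topDualPairing.2 hx
    have hqL : Tendsto q U (𝓝 L) := by
      rw [Tendsto, ← Ultrafilter.coe_map, Ultrafilter.ofComapInfPrincipal_eq_of_map hq]
      exact hGL
    exact ⟨_, tendsto_nhds_unique hqx hqL⟩

end WeakCompactness

def IteratedLimitsCommute {I J X : Type*} [TopologicalSpace X] [Nonempty X] (f : I → J → X) :
    Prop :=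
  ∀ (U : Ultrafilter I) (V : Ultrafilter J),
    limUnder U (fun i => limUnder V (f i)) = limUnder V (fun j => limUnder U (fun i => f i j))

theorem IteratedLimitsCommute.swap {I J X : Type*} [TopologicalSpace X] [Nonempty X]
    {f : I → J → X} (h : IteratedLimitsCommute f) : IteratedLimitsCommute (fun j i => f i j) :=
  fun V U => (h U V).symm

section IteratedLimits

variable {𝕜 I J : Type*} [RCLike 𝕜]

theorem IteratedLimitsCommute.sub_const {f : I → J → 𝕜} {C : ℝ} (hf : ∀ i j, ‖f i j‖ ≤ C)
    (h : IteratedLimitsCommute f) {x : J → 𝕜} {D : ℝ} (hx : ∀ j, ‖x j‖ ≤ D) :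
    IteratedLimitsCommute (fun i j => f i j - x j) := by
  intro U V
  have hrow : ∀ i, limUnder V (fun j => f i j - x j) = limUnder V (f i) - limUnder V x :=
    fun i => Ultrafilter.limUnder_sub (hf i) hx
  have hcol : ∀ j, limUnder U (fun i => f i j - x j) = limUnder U (fun i => f i j) - x j :=
    fun j => Ultrafilter.limUnder_sub_const (fun i => hf i j) (x j)
  simp only [hrow, hcol]
  rw [Ultrafilter.limUnder_sub_const (fun i => V.norm_limUnder_le (hf i)),
    Ultrafilter.limUnder_sub (fun j => U.norm_limUnder_le fun i => hf i j) hx, h U V]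

theorem IteratedLimitsCommute.le_of_triangular {f : I → J → 𝕜} {C : ℝ}
    (hf : ∀ i j, ‖f i j‖ ≤ C) (h : IteratedLimitsCommute f) (a : ℕ → I) (p : ℕ → J) {δ η : ℝ}
    (hupper : ∀ r s, r ≤ s → δ ≤ ‖f (a r) (p s)‖) (hlower : ∀ r s, s < r → ‖f (a r) (p s)‖ ≤ η) :
    δ ≤ η := by
  -- Take both iterated limits along images of one free ultrafilter on `ℕ`.
  set W := hyperfilter ℕ
  have hW : (W : Filter ℕ) ≤ atTop := Nat.cofinite_eq_atTop ▸ hyperfilter_le_cofinite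
  have hrow : ∀ r, δ ≤ ‖limUnder (W.map p) (f (a r))‖ := fun r => by
    rw [Ultrafilter.limUnder_map]
    exact W.le_norm_limUnder (fun s => hf _ _)
      (((eventually_ge_atTop r).filter_mono hW).mono fun s => hupper r s)
  have hcol : ∀ s, ‖limUnder (W.map a) (fun i => f i (p s))‖ ≤ η := fun s => by
    rw [Ultrafilter.limUnder_map]
    exact W.norm_limUnder_le_of_eventually (fun r => hf _ _)
      (((eventually_gt_atTop s).filter_mono hW).mono fun r => hlower r s)
  have hcomm := h (W.map a) (W.map p)
  rw [Ultrafilter.limUnder_map, Ultrafilter.limUnder_map] at hcomm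
  calc δ ≤ ‖limUnder W ((fun i => limUnder (W.map p) (f i)) ∘ a)‖ :=
        W.le_norm_limUnder (fun r => (W.map p).norm_limUnder_le (hf (a r)))
          (Eventually.of_forall hrow)
    _ = ‖limUnder W ((fun j => limUnder (W.map a) (fun i => f i j)) ∘ p)‖ := by rw [hcomm]
    _ ≤ η := W.norm_limUnder_le_of_eventually
          (fun s => (W.map a).norm_limUnder_le fun i => hf i (p s)) (Eventually.of_forall hcol)

end IteratedLimits

theorem exists_seq_of_forall_exists_succ {σ : Type*} {P : σ → Prop} {R : σ → σ → Prop} {s₀ : σ}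
    (h₀ : P s₀) (h : ∀ s, P s → ∃ t, P t ∧ R s t) :
    ∃ u : ℕ → σ, ∀ n, P (u n) ∧ R (u n) (u (n + 1)) := by
  choose! F hFP hFR using h
  have hP : ∀ n, P (F^[n] s₀) := fun n => by
    induction n with
    | zero => exact h₀
    | succ n ih => rw [Function.iterate_succ_apply']; exact hFP _ ih
  refine ⟨fun n => F^[n] s₀, fun n => ⟨hP n, ?_⟩⟩
  show R (F^[n] s₀) (F^[n + 1] s₀)
  rw [Function.iterate_succ_apply']
  exact hFR _ (hP n)

namespace lp

variable {𝕜 I J : Type*} [RCLike 𝕜]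

theorem norm_apply_le_norm_infty (x : ℓ^∞(J, 𝕜)) (j : J) : ‖x j‖ ≤ ‖x‖ :=
  norm_apply_le_norm ENNReal.top_ne_zero x j

variable (𝕜) in
noncomputable def limUnderCLM (V : Ultrafilter J) : ℓ^∞(J, 𝕜) →L[𝕜] 𝕜 :=
  LinearMap.mkContinuous
    { toFun := fun x => limUnder V x
      map_add' := fun x y =>
        ((V.tendsto_limUnder_of_norm_le (norm_apply_le_norm_infty x)).add
          (V.tendsto_limUnder_of_norm_le (norm_apply_le_norm_infty y))).limUnder_eq
      map_smul' := fun c x =>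
        ((V.tendsto_limUnder_of_norm_le (norm_apply_le_norm_infty x)).const_smul c).limUnder_eq }
    1 fun x => (V.norm_limUnder_le (norm_apply_le_norm_infty x)).trans_eq (one_mul _).symm

theorem isBounded_range_of_norm_apply_le {g : I → ℓ^∞(J, 𝕜)} {C : ℝ}
    (h : ∀ i j, ‖g i j‖ ≤ C) : Bornology.IsBounded (range g) :=
  isBounded_iff_forall_norm_le.2 ⟨max C 0, forall_mem_range.2 fun i =>
    lp.norm_le_of_forall_le (le_max_right _ _) fun j => (h i j).trans (le_max_left _ _)⟩

theorem _root_.IteratedLimitsCommute.of_tendsto_weak {g : I → ℓ^∞(J, 𝕜)}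
    (h : ∀ U : Ultrafilter I, ∃ x : ℓ^∞(J, 𝕜), ∀ φ : StrongDual 𝕜 ℓ^∞(J, 𝕜),
      Tendsto (fun i => φ (g i)) U (𝓝 (φ x))) :
    IteratedLimitsCommute (fun i j => g i j) := by
  intro U V
  obtain ⟨x, hx⟩ := h U
  have hcol : (fun j => limUnder U (fun i => g i j)) = x :=
    funext fun j => (hx (lp.evalCLM 𝕜 _ ∞ j)).limUnder_eq
  rw [hcol]
  exact (hx (lp.limUnderCLM 𝕜 V)).limUnder_eq

variable (𝕜) in
noncomputable def indicatorCLM (A : Set J) : ℓ^∞(J, 𝕜) →L[𝕜] ℓ^∞(J, 𝕜) :=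
  LinearMap.mkContinuous
    { toFun := fun x =>
        ⟨A.indicator x, (lp.memℓp x).mono' fun _ => norm_indicator_le_norm_self _ _⟩
      map_add' := fun x y => lp.ext (Set.indicator_add' A x y)
      map_smul' := fun c x => lp.ext (Set.indicator_const_smul A c x) }
    1 fun _ => (lp.norm_mono ENNReal.top_ne_zero fun _ => norm_indicator_le_norm_self _ _).trans_eq
      (one_mul _).symm

@[simp]
theorem coe_indicatorCLM (A : Set J) (x : ℓ^∞(J, 𝕜)) : ⇑(indicatorCLM 𝕜 A x) = A.indicator x :=
  rfl

theorem norm_indicatorCLM_le (A : Set J) : ‖indicatorCLM 𝕜 A‖ ≤ 1 :=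
  LinearMap.mkContinuous_norm_le _ zero_le_one _

theorem indicatorCLM_indicatorCLM_of_subset {A B : Set J} (h : A ⊆ B) (x : ℓ^∞(J, 𝕜)) :
    indicatorCLM 𝕜 B (indicatorCLM 𝕜 A x) = indicatorCLM 𝕜 A x :=
  lp.ext (by simp [Set.indicator_indicator, inter_eq_right.2 h])

theorem indicatorCLM_union_of_disjoint {A B : Set J} (h : Disjoint A B) :
    indicatorCLM 𝕜 (A ∪ B) = indicatorCLM 𝕜 A + indicatorCLM 𝕜 B := by
  ext1 x
  exact lp.ext (Set.indicator_union_of_disjoint h x)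

theorem norm_indicatorCLM_add_le_max {A B : Set J} (h : Disjoint A B) (x y : ℓ^∞(J, 𝕜)) :
    ‖indicatorCLM 𝕜 A x + indicatorCLM 𝕜 B y‖ ≤ max ‖x‖ ‖y‖ := by
  refine lp.norm_le_of_forall_le (le_max_of_le_left (norm_nonneg x)) fun j => ?_
  rw [lp.coeFn_add, Pi.add_apply, coe_indicatorCLM, coe_indicatorCLM]
  by_cases hA : j ∈ A
  · rw [Set.indicator_of_mem hA, Set.indicator_of_notMem (h.notMem_of_mem_left hA), add_zero]
    exact le_max_of_le_left (norm_apply_le_norm_infty x j)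
  · rw [Set.indicator_of_notMem hA, zero_add]
    exact (norm_indicator_le_norm_self _ _).trans
      (le_max_of_le_right (norm_apply_le_norm_infty y j))

variable (φ : StrongDual 𝕜 ℓ^∞(J, 𝕜))

/-- The total variation on `A` of the finitely additive measure representing `φ`. -/
noncomputable def variation (A : Set J) : ℝ :=
  ‖φ ∘L indicatorCLM 𝕜 A‖

theorem variation_nonneg (A : Set J) : 0 ≤ variation φ A :=
  norm_nonneg _

theorem norm_apply_indicatorCLM_le (A : Set J) (x : ℓ^∞(J, 𝕜)) :
    ‖φ (indicatorCLM 𝕜 A x)‖ ≤ variation φ A * ‖x‖ :=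
  (φ ∘L indicatorCLM 𝕜 A).le_opNorm x

theorem variation_le_norm (A : Set J) : variation φ A ≤ ‖φ‖ :=
  (φ.opNorm_comp_le _).trans (mul_le_of_le_one_right (norm_nonneg φ) (norm_indicatorCLM_le A))

theorem variation_mono {A B : Set J} (h : A ⊆ B) : variation φ A ≤ variation φ B := by
  have hcomp : φ ∘L indicatorCLM 𝕜 A = (φ ∘L indicatorCLM 𝕜 B) ∘L indicatorCLM 𝕜 A := by
    ext1 x
    simp [indicatorCLM_indicatorCLM_of_subset h]
  rw [variation, hcomp]
  exact (ContinuousLinearMap.opNorm_comp_le _ _).trans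
    (mul_le_of_le_one_right (variation_nonneg φ B) (norm_indicatorCLM_le A))

theorem variation_le_inter_add_diff (S X : Set J) :
    variation φ S ≤ variation φ (S ∩ X) + variation φ (S \ X) := by
  rw [variation, ← inter_union_sdiff S X,
    indicatorCLM_union_of_disjoint (disjoint_sdiff_inter.symm), ContinuousLinearMap.comp_add,
    inter_union_sdiff]
  exact norm_add_le _ _

theorem nonempty_of_variation_pos {A : Set J} (h : 0 < variation φ A) : A.Nonempty := by
  rw [nonempty_iff_ne_empty]
  rintro rfl
  have hzero : indicatorCLM 𝕜 (∅ : Set J) = 0 := by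
    ext1 x
    exact lp.ext (Set.indicator_empty x)
  simp [variation, hzero] at h

theorem add_variation_le_variation_union {A B : Set J} (h : Disjoint A B) :
    variation φ A + variation φ B ≤ variation φ (A ∪ B) := by
  -- Unimodular factors make both values nonnegative; disjoint supports keep the sum in the
  -- unit ball.
  have key : ∀ x y : ℓ^∞(J, 𝕜), ‖x‖ ≤ 1 → ‖y‖ ≤ 1 →
      ‖φ (indicatorCLM 𝕜 A x)‖ + ‖φ (indicatorCLM 𝕜 B y)‖ ≤ variation φ (A ∪ B) := by
    intro x y hx hy
    obtain ⟨a, ha, hax⟩ := RCLike.exists_norm_eq_mul_self (φ (indicatorCLM 𝕜 A x))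
    obtain ⟨b, hb, hby⟩ := RCLike.exists_norm_eq_mul_self (φ (indicatorCLM 𝕜 B y))
    set z := indicatorCLM 𝕜 A (a • x) + indicatorCLM 𝕜 B (b • y)
    have hz : ‖z‖ ≤ 1 := (norm_indicatorCLM_add_le_max h _ _).trans
      (max_le (by rwa [norm_smul, ha, one_mul]) (by rwa [norm_smul, hb, one_mul]))
    have hzAB : indicatorCLM 𝕜 (A ∪ B) z = z := by
      simp only [z, map_add, indicatorCLM_indicatorCLM_of_subset subset_union_left,
        indicatorCLM_indicatorCLM_of_subset subset_union_right]
    have hφz : φ (indicatorCLM 𝕜 (A ∪ B) z) =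
        ((‖φ (indicatorCLM 𝕜 A x)‖ + ‖φ (indicatorCLM 𝕜 B y)‖ : ℝ) : 𝕜) := by
      rw [hzAB, map_add, map_smul, map_smul, map_smul, map_smul, smul_eq_mul, smul_eq_mul,
        ← hax, ← hby, RCLike.ofReal_add]
    calc ‖φ (indicatorCLM 𝕜 A x)‖ + ‖φ (indicatorCLM 𝕜 B y)‖
        = ‖φ (indicatorCLM 𝕜 (A ∪ B) z)‖ := by
          rw [hφz, RCLike.norm_ofReal, abs_of_nonneg (by positivity)]
      _ ≤ variation φ (A ∪ B) * ‖z‖ := norm_apply_indicatorCLM_le φ _ z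
      _ ≤ variation φ (A ∪ B) := mul_le_of_le_one_right (variation_nonneg φ _) hz
  refine le_of_forall_pos_lt_add fun ε hε => ?_
  obtain ⟨x, hx, hAx⟩ := (φ ∘L indicatorCLM 𝕜 A).exists_lt_apply_of_lt_opNorm
    (sub_lt_self (variation φ A) (half_pos hε))
  obtain ⟨y, hy, hBy⟩ := (φ ∘L indicatorCLM 𝕜 B).exists_lt_apply_of_lt_opNorm
    (sub_lt_self (variation φ B) (half_pos hε))
  have := key x y hx.le hy.le
  simp only [ContinuousLinearMap.comp_apply] at hAx hBy
  linarith

theorem norm_apply_le_add_variation {δ : ℝ} (hδ : 0 ≤ δ) (x : ℓ^∞(J, 𝕜)) :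
    ‖φ x‖ ≤ ‖φ‖ * δ + variation φ {j | δ ≤ ‖x j‖} * ‖x‖ := by
  set A := {j | δ ≤ ‖x j‖}
  have hsplit : indicatorCLM 𝕜 A x + indicatorCLM 𝕜 Aᶜ x = x :=
    lp.ext (Set.indicator_self_add_compl A x)
  have hsmall : ‖indicatorCLM 𝕜 Aᶜ x‖ ≤ δ := by
    refine lp.norm_le_of_forall_le hδ fun j => ?_
    by_cases hj : j ∈ Aᶜ
    · simpa [Set.indicator_of_mem hj] using (not_le.1 (notMem_of_mem_compl hj)).le
    · simpa [Set.indicator_of_notMem hj] using hδ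
  calc ‖φ x‖ ≤ ‖φ (indicatorCLM 𝕜 A x)‖ + ‖φ (indicatorCLM 𝕜 Aᶜ x)‖ := by
        conv_lhs => rw [← hsplit, map_add]
        exact norm_add_le _ _
    _ ≤ variation φ A * ‖x‖ + ‖φ‖ * δ :=
        add_le_add (norm_apply_indicatorCLM_le φ A x) (φ.le_opNorm_of_le hsmall)
    _ = ‖φ‖ * δ + variation φ A * ‖x‖ := add_comm _ _

theorem sum_variation_le_norm {ι : Type*} {t : Finset ι} {D : ι → Set J}
    (hD : (t : Set ι).PairwiseDisjoint D) : ∑ b ∈ t, variation φ (D b) ≤ ‖φ‖ := by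
  classical
  suffices ∑ b ∈ t, variation φ (D b) ≤ variation φ (⋃ b ∈ t, D b) from
    this.trans (variation_le_norm φ _)
  induction t using Finset.induction_on with
  | empty => simp [variation_nonneg]
  | insert a t ha ih =>
    rw [Finset.coe_insert, pairwiseDisjoint_insert] at hD
    rw [Finset.sum_insert ha, Finset.set_biUnion_insert]
    refine (add_le_add_right (ih hD.1) _).trans (add_variation_le_variation_union φ ?_)
    exact disjoint_iUnion₂_right.2 fun b hb => hD.2 b hb (ne_of_mem_of_not_mem hb ha).symm

theorem variation_sub_sum_le {ι : Type*} (S : Set J) (X : ι → Set J) (t : Finset ι) :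
    variation φ S - ∑ a ∈ t, variation φ (S ∩ X a) ≤ variation φ (S \ ⋃ a ∈ t, X a) := by
  classical
  induction t using Finset.induction_on generalizing S with
  | empty => simp
  | insert a t ha ih =>
    rw [Finset.sum_insert ha, Finset.set_biUnion_insert, ← sdiff_sdiff]
    have hmono : ∑ b ∈ t, variation φ ((S \ X a) ∩ X b) ≤ ∑ b ∈ t, variation φ (S ∩ X b) :=
      Finset.sum_le_sum fun b _ => variation_mono φ (inter_subset_inter_left _ sdiff_subset)
    linarith [ih (S \ X a), variation_le_inter_add_diff φ S (X a)]

theorem natCast_mul_sub_le_norm {D : ℕ → Set J} {β c : ℝ} (hc : 0 ≤ c)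
    (hD : ∀ b, β ≤ variation φ (D b)) (hDc : ∀ a b, a < b → variation φ (D a ∩ D b) ≤ c)
    (n : ℕ) : n * (β - n * c) ≤ ‖φ‖ := by
  set E : ℕ → Set J := fun b => D b \ ⋃ a ∈ Finset.range b, D a
  have hE : ∀ b < n, β - n * c ≤ variation φ (E b) := by
    intro b hb
    have hsum : ∑ a ∈ Finset.range b, variation φ (D b ∩ D a) ≤ b * c := by
      refine (Finset.sum_le_sum fun a ha => ?_).trans_eq (b := ∑ _a ∈ Finset.range b, c) ?_
      · exact (inter_comm (D a) (D b)) ▸ hDc a b (Finset.mem_range.1 ha)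
      · rw [Finset.sum_const, Finset.card_range, nsmul_eq_mul]
    have hbn : (b : ℝ) * c ≤ n * c := mul_le_mul_of_nonneg_right (by exact_mod_cast hb.le) hc
    linarith [variation_sub_sum_le φ (D b) D (Finset.range b), hD b]
  have hdisj : ((Finset.range n : Set ℕ)).PairwiseDisjoint E := by
    refine ((pairwise_disjoint_on E).2 fun a b hab => ?_).set_pairwise _
    exact Set.disjoint_left.2 fun j hja hjb => hjb.2 (mem_biUnion (Finset.mem_range.2 hab) hja.1)
  calc n * (β - n * c) = ∑ _b ∈ Finset.range n, (β - n * c) := by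
        rw [Finset.sum_const, Finset.card_range, nsmul_eq_mul]
    _ ≤ ∑ b ∈ Finset.range n, variation φ (E b) :=
        Finset.sum_le_sum fun b hb => hE b (Finset.mem_range.1 hb)
    _ ≤ ‖φ‖ := sum_variation_le_norm φ hdisj

theorem exists_variation_inter_ge_mem (U : Ultrafilter I) (A : I → Set J) {B : Set J}
    {T : Set I} (hT : T ∈ U) {β : ℝ} (hβ : 0 < β)
    (hmass : ∀ i ∈ T, β ≤ variation φ (B ∩ A i)) :
    ∃ i₀ ∈ T, ∃ β' > 0, {i ∈ T | β' ≤ variation φ (B ∩ A i₀ ∩ A i)} ∈ U := by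
  -- Otherwise pick `n > 2‖φ‖ / β` rows whose pairwise overlaps have variation `< β / (2n)`:
  -- disjointifying their sets gives `n` sets of variation `≥ β / 2`, more than `‖φ‖` in all.
  by_contra! hcon
  obtain ⟨n, hn⟩ := exists_nat_gt (2 * ‖φ‖ / β)
  have hn0 : (0 : ℝ) < n := lt_of_le_of_lt (by positivity) hn
  set c := β / (2 * n)
  have hsmall : ∀ i₀ ∈ T, {i | variation φ (B ∩ A i₀ ∩ A i) < c} ∈ U := fun i₀ hi₀ =>
    mem_of_superset (inter_mem (U.compl_mem_iff_notMem.2 (hcon i₀ hi₀ c (by positivity))) hT)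
      fun i hi => not_le.1 fun h => hi.1 ⟨hi.2, h⟩
  obtain ⟨s, hsT, hs⟩ := exists_seq_of_forall_finset_exists (· ∈ T)
    (fun i i' => variation φ (B ∩ A i ∩ A i') < c) fun F hF =>
      (U.nonempty_of_mem (inter_mem hT ((biInter_finset_mem F).2 fun i hi =>
        hsmall i (hF i hi)))).imp fun i hi => ⟨hi.1, fun x hx => mem_iInter₂.1 hi.2 x hx⟩
  have hbound := natCast_mul_sub_le_norm φ (D := fun b => B ∩ A (s b)) (β := β) (c := c)
    (by positivity)
    (fun b => hmass _ (hsT b))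
    (fun a b hab => by rw [← inter_inter_distrib_left, ← inter_assoc]; exact (hs a b hab).le) n
  have hval : (n : ℝ) * (β - n * c) = n * β / 2 := by
    simp only [c]
    field_simp
    ring
  rw [div_lt_iff₀ hβ] at hn
  linarith

theorem exists_triangular_of_variation_ge (U : Ultrafilter I) (A : I → Set J) {N : J → Set I}
    (hN : ∀ p, N p ∈ U) {T : Set I} (hT : T ∈ U) {β : ℝ} (hβ : 0 < β)
    (hmass : ∀ i ∈ T, β ≤ variation φ (A i)) :
    ∃ (a : ℕ → I) (p : ℕ → J), (∀ r s, r ≤ s → p s ∈ A (a r)) ∧ ∀ r s, s < r → a r ∈ N (p s) := by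
  -- After `n` steps the state `(B, T)` has `B = A (a 0) ∩ ⋯ ∩ A (a (n - 1)) ∋ p (n - 1)` and
  -- `T ⊆ N (p 0) ∩ ⋯ ∩ N (p (n - 1))` is the set of rows still admissible as `a n`.
  obtain ⟨u, hu⟩ := exists_seq_of_forall_exists_succ
    (P := fun st : Set J × Set I => st.2 ∈ U ∧ ∃ β > 0, ∀ i ∈ st.2, β ≤ variation φ (st.1 ∩ A i))
    (R := fun st st' => ∃ i ∈ st.2, ∃ p ∈ st'.1, st'.1 = st.1 ∩ A i ∧ st'.2 ⊆ st.2 ∩ N p)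
    (s₀ := (univ, T)) ⟨hT, β, hβ, by simpa using hmass⟩ (by
      rintro ⟨B, T⟩ ⟨hT, β, hβ, hmass⟩
      obtain ⟨i₀, hi₀, β', hβ', hU⟩ := exists_variation_inter_ge_mem φ U A hT hβ hmass
      obtain ⟨p, hp⟩ := nonempty_of_variation_pos φ (hβ.trans_le (hmass i₀ hi₀))
      exact ⟨(B ∩ A i₀, {i ∈ T | β' ≤ variation φ (B ∩ A i₀ ∩ A i)} ∩ N p),
        ⟨inter_mem hU (hN p), β', hβ', fun i hi => hi.1.2⟩,
        i₀, hi₀, p, hp, rfl, fun i hi => ⟨hi.1.1, hi.2⟩⟩)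
  choose a ha p hp hB hT using fun n => (hu n).2
  have hBanti : Antitone fun n => (u n).1 :=
    antitone_nat_of_succ_le fun n => (hB n).trans_subset inter_subset_left
  have hTanti : Antitone fun n => (u n).2 :=
    antitone_nat_of_succ_le fun n => (hT n).trans inter_subset_left
  refine ⟨a, p, fun r s hrs => ?_, fun r s hsr => (hT s (hTanti hsr (ha r))).2⟩
  have hps : p s ∈ (u (r + 1)).1 := hBanti (Nat.succ_le_succ hrs) (hp s)
  rw [hB r] at hps
  exact hps.2

end lp

section

variable {𝕜 I J : Type*} [RCLike 𝕜]

theorem tendsto_apply_zero_of_iteratedLimitsCommute {g : I → ℓ^∞(J, 𝕜)}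
    (hb : Bornology.IsBounded (range g)) (h : IteratedLimitsCommute (fun i j => g i j))
    {U : Ultrafilter I} (h0 : ∀ j, Tendsto (fun i => g i j) U (𝓝 0))
    (φ : StrongDual 𝕜 ℓ^∞(J, 𝕜)) : Tendsto (fun i => φ (g i)) U (𝓝 0) := by
  obtain ⟨C, hC, hgC⟩ := hb.exists_pos_norm_le
  have hg : ∀ i, ‖g i‖ ≤ C := fun i => hgC _ (mem_range_self i)
  have hc := U.tendsto_limUnder_of_norm_le fun i => φ.le_opNorm_of_le (hg i)
  set c := limUnder U (fun i => φ (g i))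
  suffices c = 0 by rwa [this] at hc
  by_contra hc0
  have hε : 0 < ‖c‖ / 2 := half_pos (norm_pos_iff.2 hc0)
  obtain ⟨δ, hδ, hδφ⟩ := exists_pos_mul_lt hε ‖φ‖
  have hT : {i | ‖c‖ / 2 < ‖φ (g i)‖} ∈ U :=
    hc.norm.eventually (lt_mem_nhds (half_lt_self (norm_pos_iff.2 hc0)))
  have hmass : ∀ i ∈ {i | ‖c‖ / 2 < ‖φ (g i)‖},
      (‖c‖ / 2 - ‖φ‖ * δ) / C ≤ lp.variation φ {j | δ ≤ ‖g i j‖} := by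
    intro i hi
    have hi' : ‖c‖ / 2 < ‖φ (g i)‖ := hi
    rw [div_le_iff₀ hC]
    linarith [lp.norm_apply_le_add_variation φ hδ.le (g i),
      mul_le_mul_of_nonneg_left (hg i) (lp.variation_nonneg φ {j | δ ≤ ‖g i j‖})]
  have hN : ∀ j, {i | ‖g i j‖ < δ / 2} ∈ U := fun j =>
    (h0 j).norm.eventually (gt_mem_nhds (by rw [norm_zero]; exact half_pos hδ))
  obtain ⟨a, p, hup, hlow⟩ := lp.exists_triangular_of_variation_ge φ U
    (fun i => {j | δ ≤ ‖g i j‖}) hN hT (div_pos (by linarith) hC) hmass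
  have hupper : ∀ r s, r ≤ s → δ ≤ ‖g (a r) (p s)‖ := hup
  have hlower : ∀ r s, s < r → ‖g (a r) (p s)‖ ≤ δ / 2 := fun r s hsr => (hlow r s hsr).le
  have hf : ∀ i j, ‖g i j‖ ≤ C := fun i j => (lp.norm_apply_le_norm_infty _ _).trans (hg i)
  have key : δ ≤ δ / 2 := h.le_of_triangular hf a p hupper hlower
  linarith

theorem exists_tendsto_weak_of_iteratedLimitsCommute {g : I → ℓ^∞(J, 𝕜)}
    (hb : Bornology.IsBounded (range g)) (h : IteratedLimitsCommute (fun i j => g i j))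
    (U : Ultrafilter I) :
    ∃ x : ℓ^∞(J, 𝕜), ∀ φ : StrongDual 𝕜 ℓ^∞(J, 𝕜), Tendsto (fun i => φ (g i)) U (𝓝 (φ x)) := by
  obtain ⟨C, -, hgC⟩ := hb.exists_pos_norm_le
  have hf : ∀ i j, ‖g i j‖ ≤ C := fun i j =>
    (lp.norm_apply_le_norm_infty _ _).trans (hgC _ (mem_range_self i))
  have hx : ∀ j, ‖limUnder U (fun i => g i j)‖ ≤ C := fun j => U.norm_limUnder_le fun i => hf i j
  let x : ℓ^∞(J, 𝕜) :=
    ⟨fun j => limUnder U (fun i => g i j), memℓp_infty ⟨C, forall_mem_range.2 hx⟩⟩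
  refine ⟨x, fun φ => ?_⟩
  have hx0 : ∀ j, Tendsto (fun i => (g i - x) j) U (𝓝 0) := fun j =>
    sub_self (x j) ▸ (U.tendsto_limUnder_of_norm_le fun i => hf i j).sub_const (x j)
  have hbx : Bornology.IsBounded (range fun i => g i - x) :=
    isBounded_iff_forall_norm_le.2 ⟨C + ‖x‖, forall_mem_range.2 fun i =>
      (norm_sub_le _ _).trans (add_le_add_left (hgC _ (mem_range_self i)) _)⟩
  simpa using (tendsto_apply_zero_of_iteratedLimitsCommute hbx (h.sub_const hf hx) hx0 φ).add_const
    (φ x)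

end

/-- for a bounded complex matrix `f` on `I × J`, the set of rows is
relatively weakly compact in `ℓ^∞(J)` iff the set of columns is relatively
weakly compact in `ℓ^∞(I)`.  Here `g i` is the row `f i` and `h j` is the
column `f · j`, viewed as elements of the `ℓ^∞` spaces. -/
theorem rows_relWeaklyCompact_iff_columns {I J : Type*} (f : I → J → ℂ)
    (hb : ∃ C, ∀ i j, ‖f i j‖ ≤ C)
    (g : I → lp (fun _ : J => ℂ) ∞) (hg : ∀ i j, g i j = f i j)
    (h : J → lp (fun _ : I => ℂ) ∞) (hh : ∀ j i, h j i = f i j) :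
    IsCompact (closure (toWeakSpace ℂ (lp (fun _ : J => ℂ) ∞) '' Set.range g)) ↔
    IsCompact (closure (toWeakSpace ℂ (lp (fun _ : I => ℂ) ∞) '' Set.range h)) := by
  obtain ⟨C, hC⟩ := hb
  have hrows : (fun i j => g i j) = f := funext fun i => funext (hg i)
  have hcols : (fun j i => h j i) = fun j i => f i j := funext fun j => funext (hh j)
  have hgb := lp.isBounded_range_of_norm_apply_le fun i j => hg i j ▸ hC i j
  have hhb := lp.isBounded_range_of_norm_apply_le fun j i => hh j i ▸ hC i j
  rw [isCompact_closure_toWeakSpace_range_iff hgb, isCompact_closure_toWeakSpace_range_iff hhb]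
  constructor
  · intro hw
    refine exists_tendsto_weak_of_iteratedLimitsCommute hhb ?_
    rw [hcols]
    exact (hrows ▸ IteratedLimitsCommute.of_tendsto_weak hw).swap
  · intro hw
    refine exists_tendsto_weak_of_iteratedLimitsCommute hgb ?_
    rw [hrows]
    exact (hcols ▸ IteratedLimitsCommute.of_tendsto_weak hw).swap
end

section
/- Let I and J be compact convex subsets of Hausdorff locally convex topological vector spaces and f : I × J → ℂ a bounded function, separately continuous and affine in each variable. Then the set of rows {f(i,·) : i ∈ I} is weakly compact in the Banach space C(J) of continuous functions with sup-norm. -/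
/-!
On affine functions, every continuous linear functional `φ` on `C(B)` is a combination of point
evaluations `∑ k, r k * I ^ k * v (x k)` with weights `r k ∈ [0, ‖φ‖]`. Restricted to the affine
functions, these combinations form a weak-* compact set, which is convex because two evaluations
with the same phase merge into one at a convex combination of the two points. If `φ` were not in
it, Hahn–Banach would give an affine `w` with `re (φ w)` above the values of all combinations; but
one of them takes the value `‖φ‖ * ‖w‖` at a point where `‖w‖` is attained. Hence `a ↦ φ (f a ·)`
is continuous for each `φ`, the row map `A → C(B)` is weakly continuous, and its image of the
compact set `A` is weakly compact.
-/

open BoundedContinuousFunction Complex Set ComplexConjugate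

theorem Complex.exists_sum_mul_I_pow_eq (z : ℂ) :
    ∃ r : Fin 4 → ℝ, (∀ k, r k ∈ Icc 0 ‖z‖) ∧ ∑ k, (r k : ℂ) * I ^ (k : ℕ) = z := by
  have hmax : ∀ t : ℝ, |t| ≤ ‖z‖ → max t 0 ∈ Icc 0 ‖z‖ := fun t ht =>
    ⟨le_max_right _ _, max_le (le_of_abs_le ht) (norm_nonneg z)⟩
  refine ⟨![max z.re 0, max z.im 0, max (-z.re) 0, max (-z.im) 0], fun k => ?_, ?_⟩
  · fin_cases k
    · exact hmax _ (abs_re_le_norm z)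
    · exact hmax _ (abs_im_le_norm z)
    · exact hmax _ ((abs_neg _).trans_le (abs_re_le_norm z))
    · exact hmax _ ((abs_neg _).trans_le (abs_im_le_norm z))
  · apply Complex.ext <;>
      simp [Fin.sum_univ_four, pow_succ, ← sub_eq_add_neg, max_zero_sub_max_neg_zero_eq_self]

namespace BoundedContinuousFunction

section

variable {X : Type*} [TopologicalSpace X]

theorem exists_norm_eq_norm_apply [CompactSpace X] [Nonempty X] (w : X →ᵇ ℂ) :
    ∃ x, ‖w‖ = ‖w x‖ := by
  obtain ⟨x, -, hx⟩ :=
    isCompact_univ.exists_isMaxOn univ_nonempty (map_continuous w).norm.continuousOn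
  exact ⟨x, le_antisymm ((norm_le (norm_nonneg _)).mpr fun y => hx (mem_univ y))
    (norm_coe_le_norm w x)⟩

noncomputable def evalCombination (r : Fin 4 → ℝ) (x : Fin 4 → X) : StrongDual ℂ (X →ᵇ ℂ) :=
  ∑ k, ((r k : ℂ) * I ^ (k : ℕ)) • evalCLM ℂ (x k)

@[simp]
theorem evalCombination_apply (r : Fin 4 → ℝ) (x : Fin 4 → X) (v : X →ᵇ ℂ) :
    evalCombination r x v = ∑ k, (r k : ℂ) * I ^ (k : ℕ) * v (x k) := by
  simp [evalCombination]

theorem exists_evalCombination_eq_mul_norm [CompactSpace X] [Nonempty X] (w : X →ᵇ ℂ) {c : ℝ}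
    (hc : 0 ≤ c) : ∃ r x, (∀ k, r k ∈ Icc 0 c) ∧ evalCombination r x w = c * ‖w‖ := by
  obtain ⟨x₀, hx₀⟩ := exists_norm_eq_norm_apply w
  rcases eq_or_ne ‖w‖ 0 with hw | hw
  · exact ⟨0, fun _ => x₀, fun _ => ⟨le_rfl, hc⟩, by simp [hw]⟩
  set z : ℂ := ((c / ‖w‖ : ℝ) : ℂ) * conj (w x₀)
  have hz : ‖z‖ = c := by
    rw [norm_mul, norm_real, norm_conj, ← hx₀, Real.norm_of_nonneg (by positivity),
      div_mul_cancel₀ c hw]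
  obtain ⟨r, hr, hrz⟩ := exists_sum_mul_I_pow_eq z
  refine ⟨r, fun _ => x₀, hz ▸ hr, ?_⟩
  rw [evalCombination_apply, ← Finset.sum_mul, hrz, mul_assoc, conj_mul', ← hx₀]
  push_cast
  field_simp

end

section

variable {F : Type*} [AddCommGroup F] [Module ℝ F] [TopologicalSpace F]

def affineSubmodule (B : Set F) : Submodule ℂ (B →ᵇ ℂ) where
  carrier := {v | ∀ (x y : B) (a b : ℝ), 0 ≤ a → 0 ≤ b → a + b = 1 →
    ∀ h : a • (x : F) + b • (y : F) ∈ B, v ⟨_, h⟩ = a * v x + b * v y}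
  add_mem' {v w} hv hw x y a b ha hb hab h := by
    simp only [coe_add, Pi.add_apply, hv x y a b ha hb hab h, hw x y a b ha hb hab h]
    ring
  zero_mem' := by simp
  smul_mem' c v hv x y a b ha hb hab h := by
    simp only [coe_smul, smul_eq_mul, hv x y a b ha hb hab h]
    ring

theorem exists_mul_apply_eq_add_of_convex {B : Set F} (hB : Convex ℝ B) {r s : ℝ} (hr : 0 ≤ r)
    (hs : 0 ≤ s) (x y : B) :
    ∃ z : B, ∀ v ∈ affineSubmodule B, ((r + s : ℝ) : ℂ) * v z = r * v x + s * v y := by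
  rcases (add_nonneg hr hs).eq_or_lt with hrs | hrs
  · obtain ⟨rfl, rfl⟩ : r = 0 ∧ s = 0 := by constructor <;> linarith
    exact ⟨x, fun v _ => by simp⟩
  have hmem : (r / (r + s)) • (x : F) + (s / (r + s)) • (y : F) ∈ B :=
    hB x.2 y.2 (by positivity) (by positivity) (by field_simp)
  refine ⟨⟨_, hmem⟩, fun v hv => ?_⟩
  rw [hv x y _ _ (by positivity) (by positivity) (by field_simp) hmem]
  have : (r : ℂ) + s ≠ 0 := by exact_mod_cast hrs.ne'
  push_cast
  field_simp

/-- The algebraic dual of the affine functions on `B`, with its weak-* topology. -/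
abbrev AffineWeakDual (B : Set F) :=
  WeakBilin (LinearMap.id : Module.Dual ℂ (affineSubmodule B) →ₗ[ℂ] affineSubmodule B →ₗ[ℂ] ℂ)

instance (B : Set F) : T2Space (AffineWeakDual B) :=
  (WeakBilin.isEmbedding fun _ _ h => h).t2Space

noncomputable def restrictAffine {B : Set F} (ψ : StrongDual ℂ (B →ᵇ ℂ)) : AffineWeakDual B :=
  ψ.toLinearMap ∘ₗ (affineSubmodule B).subtype

def affineEvalCombinations (B : Set F) (c : ℝ) : Set (AffineWeakDual B) :=
  (fun p : (Fin 4 → ℝ) × (Fin 4 → B) => restrictAffine (evalCombination p.1 p.2)) ''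
    (univ.pi (fun _ => Icc 0 c) ×ˢ univ)

theorem isCompact_affineEvalCombinations {B : Set F} [CompactSpace B] (c : ℝ) :
    IsCompact (affineEvalCombinations B c) := by
  refine ((isCompact_univ_pi fun _ => isCompact_Icc).prod isCompact_univ).image ?_
  refine WeakBilin.continuous_of_continuous_eval _ fun v => ?_
  change Continuous fun p : (Fin 4 → ℝ) × (Fin 4 → B) => evalCombination p.1 p.2 (v : B →ᵇ ℂ)
  simp only [evalCombination_apply]
  fun_prop

theorem convex_affineEvalCombinations {B : Set F} (hB : Convex ℝ B) (c : ℝ) :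
    Convex ℝ (affineEvalCombinations B c) := by
  rintro _ ⟨⟨r, x⟩, ⟨hr, -⟩, rfl⟩ _ ⟨⟨s, y⟩, ⟨hs, -⟩, rfl⟩ a b ha hb hab
  choose z hz using fun k => exists_mul_apply_eq_add_of_convex hB
    (mul_nonneg ha (hr k trivial).1) (mul_nonneg hb (hs k trivial).1) (x k) (y k)
  refine ⟨⟨a • r + b • s, z⟩, ⟨fun k _ => ⟨?_, ?_⟩, trivial⟩, ?_⟩
  · have := (hr k trivial).1; have := (hs k trivial).1
    simp only [Pi.add_apply, Pi.smul_apply, smul_eq_mul]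
    positivity
  · have := (hr k trivial).2; have := (hs k trivial).2
    calc a * r k + b * s k ≤ a * c + b * c := by gcongr
      _ = c := by rw [← add_mul, hab, one_mul]
  · refine LinearMap.ext fun v => ?_
    change evalCombination _ z (v : B →ᵇ ℂ) =
      a • evalCombination r x (v : B →ᵇ ℂ) + b • evalCombination s y (v : B →ᵇ ℂ)
    simp only [evalCombination_apply, Finset.smul_sum, ← Finset.sum_add_distrib]
    refine Finset.sum_congr rfl fun k _ => ?_
    have := hz k v v.2
    simp only [Pi.add_apply, Pi.smul_apply, smul_eq_mul, real_smul, ofReal_add,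
      ofReal_mul] at this ⊢
    linear_combination I ^ (k : ℕ) * this

theorem exists_evalCombination_eq_on_affineSubmodule {B : Set F} [Nonempty B] (hB : IsCompact B)
    (hBc : Convex ℝ B) (φ : StrongDual ℂ (B →ᵇ ℂ)) :
    ∃ r x, ∀ v ∈ affineSubmodule B, φ v = evalCombination r x v := by
  have : CompactSpace B := isCompact_iff_compactSpace.mp hB
  suffices restrictAffine φ ∈ affineEvalCombinations B ‖φ‖ by
    obtain ⟨⟨r, x⟩, -, h⟩ := this
    exact ⟨r, x, fun v hv => (LinearMap.congr_fun h ⟨v, hv⟩).symm⟩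
  by_contra hφ
  obtain ⟨Λ, u, hSu, huφ⟩ := RCLike.geometric_hahn_banach_closed_point (𝕜 := ℂ)
    (convex_affineEvalCombinations hBc _) (isCompact_affineEvalCombinations _).isClosed hφ
  obtain ⟨w, rfl⟩ := LinearMap.dualEmbedding_surjective _ Λ
  obtain ⟨r, x, hr, hrx⟩ := exists_evalCombination_eq_mul_norm (w : B →ᵇ ℂ) (norm_nonneg φ)
  have hS_lt : (evalCombination r x w).re < u := hSu _ ⟨(r, x), ⟨fun k _ => hr k, trivial⟩, rfl⟩
  have hφ_gt : u < (φ w).re := huφ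
  have hφ_le : (φ w).re ≤ ‖φ‖ * ‖w‖ := (re_le_norm _).trans (φ.le_opNorm w)
  rw [hrx] at hS_lt
  norm_cast at hS_lt
  linarith

theorem continuous_toWeakSpace_of_affine {X : Type*} [TopologicalSpace X] {B : Set F}
    (hB : IsCompact B) (hBc : Convex ℝ B) {g : X → B →ᵇ ℂ}
    (hg_aff : ∀ x, g x ∈ affineSubmodule B) (hg_cont : ∀ b, Continuous fun x => g x b) :
    Continuous fun x => toWeakSpace ℂ (B →ᵇ ℂ) (g x) := by
  refine WeakBilin.continuous_of_continuous_eval _ fun φ => ?_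
  change Continuous fun x => φ (g x)
  cases isEmpty_or_nonempty B
  · have hg_zero : ∀ x, g x = 0 := fun x => ext isEmptyElim
    simp only [hg_zero, map_zero]
    exact continuous_const
  · obtain ⟨r, y, hφ⟩ := exists_evalCombination_eq_on_affineSubmodule hB hBc φ
    simp only [fun x => hφ (g x) (hg_aff x), evalCombination_apply]
    fun_prop

end

end BoundedContinuousFunction

theorem rows_weakly_compact_of_affine_general {E F : Type*}
    [TopologicalSpace E]
    [AddCommGroup F] [Module ℝ F] [TopologicalSpace F]
    (A : Set E) (B : Set F) (hA : IsCompact A)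
    (hB : IsCompact B) (hBc : Convex ℝ B)
    (f : E → F → ℂ)
    (hcol : ∀ b ∈ B, ContinuousOn (fun a => f a b) A)
    (haff₂ : ∀ a ∈ A, ∀ b₁ ∈ B, ∀ b₂ ∈ B, ∀ t : ℝ, 0 ≤ t → t ≤ 1 →
      f a (t • b₁ + (1 - t) • b₂) = (t : ℂ) * f a b₁ + (1 - (t : ℂ)) * f a b₂)
    (g : A → (B →ᵇ ℂ)) (hg : ∀ (a : A) (b : B), g a b = f a b) :
    IsCompact (toWeakSpace ℂ (↥B →ᵇ ℂ) '' Set.range g) := by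
  have : CompactSpace A := isCompact_iff_compactSpace.mp hA
  have hrows_aff : ∀ a, g a ∈ affineSubmodule B := by
    intro a x y s t hs ht hst h
    obtain rfl : t = 1 - s := by linarith
    simp only [hg, ofReal_sub, ofReal_one]
    exact haff₂ a a.2 x x.2 y y.2 s hs (by linarith)
  have hcols : ∀ b : B, Continuous fun a : A => g a b := fun b => by
    simp only [hg]
    exact (hcol b b.2).domRestrict
  rw [← range_comp]
  exact isCompact_range (continuous_toWeakSpace_of_affine hB hBc hrows_aff hcols)

/-- `A`, `B` compact convex subsets of Hausdorff locally convex
TVSs, `f` bounded, separately continuous and affine in each variable.  Then the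
set of rows (here `g a` is the row `f a` as a bounded continuous function on
`B`) is weakly compact in `C(B)`. -/
theorem rows_weakly_compact_of_affine {E F : Type*}
    [AddCommGroup E] [Module ℝ E] [TopologicalSpace E] [IsTopologicalAddGroup E]
    [ContinuousSMul ℝ E] [LocallyConvexSpace ℝ E] [T2Space E]
    [AddCommGroup F] [Module ℝ F] [TopologicalSpace F] [IsTopologicalAddGroup F]
    [ContinuousSMul ℝ F] [LocallyConvexSpace ℝ F] [T2Space F]
    (A : Set E) (B : Set F) (hA : IsCompact A) (hAc : Convex ℝ A)
    (hB : IsCompact B) (hBc : Convex ℝ B)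
    (f : E → F → ℂ) (hb : ∃ C, ∀ a ∈ A, ∀ b ∈ B, ‖f a b‖ ≤ C)
    (hrow : ∀ a ∈ A, ContinuousOn (f a) B)
    (hcol : ∀ b ∈ B, ContinuousOn (fun a => f a b) A)
    (haff₁ : ∀ b ∈ B, ∀ a₁ ∈ A, ∀ a₂ ∈ A, ∀ t : ℝ, 0 ≤ t → t ≤ 1 →
      f (t • a₁ + (1 - t) • a₂) b = (t : ℂ) * f a₁ b + (1 - (t : ℂ)) * f a₂ b)
    (haff₂ : ∀ a ∈ A, ∀ b₁ ∈ B, ∀ b₂ ∈ B, ∀ t : ℝ, 0 ≤ t → t ≤ 1 →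
      f a (t • b₁ + (1 - t) • b₂) = (t : ℂ) * f a b₁ + (1 - (t : ℂ)) * f a b₂)
    (g : A → (B →ᵇ ℂ)) (hg : ∀ (a : A) (b : B), g a b = f a b) :
    IsCompact (toWeakSpace ℂ (↥B →ᵇ ℂ) '' Set.range g) :=
  rows_weakly_compact_of_affine_general A B hA hB hBc f hcol haff₂ g hg
end
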